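/- arXiv:1609.01102 — 2 statements merged into one kernel-verified Lean document; each statement's English description precedes it below -/
import Mathlib

section
/- For every positive integer k, the number r_k^{MSO;gr} of equivalence classes of finite graphs under ≡_k^{MSO;gr} satisfies r_k^{MSO;gr} ≤ T(k + 2 + log*(k)). -/
/-- The tower function: `tower 1 = 2` and `tower (s+1) = 2 ^ tower s`. -/
def tower : ℕ → ℕ
  | 0 => 1
  | s + 1 => 2 ^ tower s

/-- `logStar k = min { i | tower i ≥ k }`. -/
noncomputable def logStar (k : ℕ) : ℕ := sInf {i : ℕ | k ≤ tower i}

/-- Monadic second-order formulas of graphs with `n` free vertex variables and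
`m` free set variables. -/
inductive MSOForm : ℕ → ℕ → Type
  | adj {n m : ℕ} : Fin n → Fin n → MSOForm n m
  | eq  {n m : ℕ} : Fin n → Fin n → MSOForm n m
  | mem {n m : ℕ} : Fin n → Fin m → MSOForm n m
  | not {n m : ℕ} : MSOForm n m → MSOForm n m
  | and {n m : ℕ} : MSOForm n m → MSOForm n m → MSOForm n m
  | allV {n m : ℕ} : MSOForm (n + 1) m → MSOForm n m
  | allS {n m : ℕ} : MSOForm n (m + 1) → MSOForm n m

/-- Quantifier depth (counting both kinds of quantifiers) of an MSO formula. -/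
def MSOForm.depth : ∀ {n m : ℕ}, MSOForm n m → ℕ
  | _, _, .adj _ _ => 0
  | _, _, .eq _ _ => 0
  | _, _, .mem _ _ => 0
  | _, _, .not φ => φ.depth
  | _, _, .and φ ψ => max φ.depth ψ.depth
  | _, _, .allV φ => φ.depth + 1
  | _, _, .allS φ => φ.depth + 1

/-- Satisfaction of an MSO formula on a graph under valuations of the vertex
variables and the set variables. -/
def MSOForm.Sat {V : Type} (G : SimpleGraph V) :
    ∀ {n m : ℕ}, MSOForm n m → (Fin n → V) → (Fin m → Set V) → Prop
  | _, _, .adj i j, v, _ => G.Adj (v i) (v j)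
  | _, _, .eq i j, v, _ => v i = v j
  | _, _, .mem i j, v, s => v i ∈ s j
  | _, _, .not φ, v, s => ¬ MSOForm.Sat G φ v s
  | _, _, .and φ ψ, v, s => MSOForm.Sat G φ v s ∧ MSOForm.Sat G ψ v s
  | _, _, .allV φ, v, s => ∀ x : V, MSOForm.Sat G φ (Fin.snoc v x) s
  | _, _, .allS φ, v, s => ∀ X : Set V, MSOForm.Sat G φ v (Fin.snoc s X)

/-- The type of finite graphs (up to the choice of vertex labels `Fin n`). -/
def FinGraph : Type := Σ n : ℕ, SimpleGraph (Fin n)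

/-- `G ≡ₖ^{MSO;gr} H`: the graphs satisfy the same MSO sentences of quantifier
depth at most `k`. -/
def MSOEquiv (k : ℕ) {α β : Type} (G : SimpleGraph α) (H : SimpleGraph β) : Prop :=
  ∀ φ : MSOForm 0 0, φ.depth ≤ k →
    (MSOForm.Sat G φ (fun i => i.elim0) (fun i => i.elim0) ↔
      MSOForm.Sat H φ (fun i => i.elim0) (fun i => i.elim0))

def msoSetoid (k : ℕ) : Setoid FinGraph where
  r G H := MSOEquiv k G.2 H.2
  iseqv := ⟨fun _ _ _ => Iff.rfl, fun h φ hφ => (h φ hφ).symm,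
    fun h1 h2 φ hφ => (h1 φ hφ).trans (h2 φ hφ)⟩

/-- The set of `≡ₖ^{MSO;gr}`-equivalence classes of finite graphs. -/
def MSOGraphClasses (k : ℕ) : Type := Quotient (msoSetoid k)

/-! Two tuples that have the same *depth-`d` type* — their atomic relations, together with the
sets of depth-`(d-1)` types of all one-vertex and one-set extensions — satisfy the same MSO
formulas of quantifier depth at most `d`. Hence `≡ₖ` is coarser than equality of depth-`k`
types of graphs, and it suffices to count types. A type with `n` vertex and `m` set variables
carries at most `2 ^ (n (n - 1) + n m)` atomic data and two sets of types one level lower;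
as long as `n + m + d ≤ k` each level costs one exponential, and the atomic data fit below
`tower (logStar k + 1) ≥ 2 ^ k`. -/

lemma tower_pos (s : ℕ) : 0 < tower s := by
  induction s with
  | zero => exact Nat.one_pos
  | succ s _ => exact Nat.two_pow_pos _

lemma self_le_tower (s : ℕ) : s ≤ tower s := by
  induction s with
  | zero => exact Nat.zero_le _
  | succ s ih => exact (Nat.lt_two_pow_self (n := s)).trans_le (Nat.pow_le_pow_right two_pos ih)

lemma tower_mono : Monotone tower :=
  monotone_nat_of_le_succ fun s => (Nat.lt_two_pow_self (n := tower s)).le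

lemma le_tower_logStar (k : ℕ) : k ≤ tower (logStar k) :=
  Nat.sInf_mem (⟨k, self_le_tower k⟩ : {i : ℕ | k ≤ tower i}.Nonempty)

lemma two_mul_le_two_pow : ∀ t : ℕ, 2 * t ≤ 2 ^ t
  | 0 => Nat.zero_le _
  | t + 1 => by rw [pow_succ']; exact Nat.mul_le_mul_left 2 Nat.lt_two_pow_self

lemma succ_mul_add_two_le_two_pow : ∀ j : ℕ, (j + 1) * j + 2 ≤ 2 ^ (j + 1)
  | 0 => le_rfl
  | j + 1 => by
    have ih := succ_mul_add_two_le_two_pow j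
    have := two_mul_le_two_pow (j + 1)
    rw [pow_succ _ (j + 1)]
    nlinarith

lemma mul_pred_add_two_le_tower_logStar_succ (k : ℕ) :
    k * (k - 1) + 2 ≤ tower (logStar k + 1) := by
  obtain ⟨j, hj⟩ : ∃ j, tower (logStar k) = j + 1 :=
    Nat.exists_eq_add_one.mpr (tower_pos _)
  have hk : k ≤ j + 1 := hj ▸ le_tower_logStar k
  calc k * (k - 1) + 2 ≤ (j + 1) * j + 2 := by gcongr; omega
    _ ≤ 2 ^ (j + 1) := succ_mul_add_two_le_two_pow j
    _ = tower (logStar k + 1) := by rw [← hj]; rfl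

lemma add_add_le_two_pow {e a b t : ℕ} (he : e ≤ t) (ha : 4 * a ≤ 2 ^ t) (hb : 4 * b ≤ 2 ^ t) :
    e + a + b ≤ 2 ^ t := by
  have := two_mul_le_two_pow t
  omega

lemma Setoid.finite_quotient_and_card_le_of_ker_le {α β : Type*} [Finite β] (f : α → β)
    {s : Setoid α} (h : Setoid.ker f ≤ s) :
    Finite (Quotient s) ∧ Nat.card (Quotient s) ≤ Nat.card β := by
  have hsurj : Function.Surjective (Setoid.map_of_le h) := Quotient.ind fun a => ⟨⟦a⟧, rfl⟩
  have hker := Setoid.quotientKerEquivRange f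
  have : Finite (Quotient (Setoid.ker f)) := Finite.of_equiv _ hker.symm
  refine ⟨Finite.of_surjective _ hsurj, ?_⟩
  calc Nat.card (Quotient s) ≤ Nat.card (Quotient (Setoid.ker f)) :=
        Nat.card_le_card_of_surjective _ hsurj
    _ = Nat.card (Set.range f) := Nat.card_congr hker
    _ ≤ Nat.card β := Finite.card_subtype_le _

lemma forall_congr_of_range_eq {α β : Sort*} {γ : Type*} {f : α → γ} {g : β → γ}
    (h : Set.range f = Set.range g) {P : α → Prop} {Q : β → Prop}
    (hPQ : ∀ a b, f a = g b → (P a ↔ Q b)) : (∀ a, P a) ↔ ∀ b, Q b := by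
  constructor
  · intro hP b
    obtain ⟨a, ha⟩ : g b ∈ Set.range f := h ▸ ⟨b, rfl⟩
    exact (hPQ a b ha).mp (hP a)
  · intro hQ a
    obtain ⟨b, hb⟩ : f a ∈ Set.range g := h ▸ ⟨a, rfl⟩
    exact (hPQ a b hb.symm).mpr (hQ b)

lemma Nat.card_prop : Nat.card Prop = 2 := by
  rw [Nat.card_eq_fintype_card, Fintype.card_prop]

lemma Nat.card_set (X : Type*) [Finite X] : Nat.card (Set X) = 2 ^ Nat.card X := by
  rw [Set, Nat.card_fun, Nat.card_prop]

namespace MSO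

/-- A binary relation on `n` points, recorded only for pairs `j < i`: symmetry and the diagonal
are known for adjacency and equality, and this halves the exponent in the count. -/
abbrev LowerTable (n : ℕ) : Type := (i : Fin n) → Fin i → Prop

def lowerTable {V : Type*} (R : V → V → Prop) {n : ℕ} (v : Fin n → V) : LowerTable n :=
  fun i j => R (v ⟨j, j.isLt.trans i.isLt⟩) (v i)

lemma rel_iff_of_lowerTable_eq {V W : Type*} {R : V → V → Prop} {S : W → W → Prop}
    (hR : ∀ x y, R x y → R y x) (hS : ∀ x y, S x y → S y x) (hdiag : ∀ x y, R x x ↔ S y y)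
    {n : ℕ} {v : Fin n → V} {w : Fin n → W} (h : lowerTable R v = lowerTable S w) (i j : Fin n) :
    R (v i) (v j) ↔ S (w i) (w j) := by
  rcases lt_trichotomy i j with hij | rfl | hij
  · exact iff_of_eq (congrFun₂ h j ⟨i, hij⟩)
  · exact hdiag _ _
  · have hji := iff_of_eq (congrFun₂ h i ⟨j, hij⟩)
    exact ⟨fun hv => hS _ _ (hji.mp (hR _ _ hv)), fun hw => hR _ _ (hji.mpr (hS _ _ hw))⟩

lemma card_lowerTable (n : ℕ) : Nat.card (LowerTable n) = 2 ^ (∑ i : Fin n, (i : ℕ)) := by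
  rw [Nat.card_pi]
  simp only [Nat.card_fun, Nat.card_prop, Nat.card_fin, Finset.prod_pow_eq_pow_sum]

abbrev Atom (n m : ℕ) : Type := LowerTable n × LowerTable n × (Fin n → Fin m → Prop)

lemma card_atom (n m : ℕ) : Nat.card (Atom n m) = 2 ^ (n * (n - 1) + n * m) := by
  have hsum : (∑ i : Fin n, (i : ℕ)) * 2 = n * (n - 1) := by
    rw [Fin.sum_univ_eq_sum_range (fun i => i) n, Finset.sum_range_id_mul_two]
  have hmem : Nat.card (Fin n → Fin m → Prop) = 2 ^ (n * m) := by
    simp only [Nat.card_fun, Nat.card_prop, Nat.card_fin, ← pow_mul, mul_comm m n]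
  rw [Nat.card_prod, Nat.card_prod, card_lowerTable, hmem, ← pow_add, ← pow_add]
  congr 1
  omega

lemma card_atom_le {k n m : ℕ} (h : n + m ≤ k) : Nat.card (Atom n m) ≤ 2 ^ (k * (k - 1)) := by
  rw [card_atom, ← Nat.mul_add]
  refine Nat.pow_le_pow_right two_pos ?_
  rcases Nat.eq_zero_or_pos n with rfl | hn
  · rw [Nat.zero_mul]; exact Nat.zero_le _
  · exact Nat.mul_le_mul (by omega) (by omega)

def atomOf {V : Type} (G : SimpleGraph V) {n m : ℕ} (v : Fin n → V) (s : Fin m → Set V) :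
    Atom n m :=
  (lowerTable G.Adj v, lowerTable Eq v, fun i j => v i ∈ s j)

def DepthType : ℕ → ℕ → ℕ → Type
  | 0, n, m => Atom n m
  | d + 1, n, m => Atom n m × Set (DepthType d (n + 1) m) × Set (DepthType d n (m + 1))

instance DepthType.finite : ∀ d n m : ℕ, Finite (DepthType d n m)
  | 0, n, m => inferInstanceAs (Finite (Atom n m))
  | d + 1, n, m =>
    have := DepthType.finite d (n + 1) m
    have := DepthType.finite d n (m + 1)
    inferInstanceAs (Finite (Atom n m × Set (DepthType d (n + 1) m) × Set (DepthType d n (m + 1))))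

lemma card_depthType_succ (d n m : ℕ) :
    Nat.card (DepthType (d + 1) n m) =
      Nat.card (Atom n m) * (2 ^ Nat.card (DepthType d (n + 1) m) *
        2 ^ Nat.card (DepthType d n (m + 1))) := by
  show Nat.card (Atom n m × Set (DepthType d (n + 1) m) × Set (DepthType d n (m + 1))) = _
  rw [Nat.card_prod, Nat.card_prod (Set _), Nat.card_set, Nat.card_set]

def depthType {V : Type} (G : SimpleGraph V) :
    (d : ℕ) → {n m : ℕ} → (Fin n → V) → (Fin m → Set V) → DepthType d n m
  | 0, _, _, v, s => atomOf G v s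
  | d + 1, _, _, v, s =>
    (atomOf G v s, Set.range fun x => depthType G d (Fin.snoc v x) s,
      Set.range fun X => depthType G d v (Fin.snoc s X))

section Sat

variable {V W : Type} {G : SimpleGraph V} {H : SimpleGraph W}

lemma atomOf_eq_of_depthType_eq {d n m : ℕ} {v : Fin n → V} {s : Fin m → Set V}
    {w : Fin n → W} {t : Fin m → Set W} (h : depthType G d v s = depthType H d w t) :
    atomOf G v s = atomOf H w t := by
  cases d with
  | zero => exact h
  | succ d => exact congrArg Prod.fst h

theorem sat_iff_of_depthType_eq {n m : ℕ} (φ : MSOForm n m) {d : ℕ} (hφ : φ.depth ≤ d)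
    {v : Fin n → V} {s : Fin m → Set V} {w : Fin n → W} {t : Fin m → Set W}
    (h : depthType G d v s = depthType H d w t) : φ.Sat G v s ↔ φ.Sat H w t := by
  induction φ generalizing d with
  | adj i j =>
    exact rel_iff_of_lowerTable_eq (fun _ _ h => h.symm) (fun _ _ h => h.symm) (fun x y => iff_of_false (G.irrefl) (H.irrefl))
      (congrArg Prod.fst (atomOf_eq_of_depthType_eq h)) i j
  | eq i j =>
    exact rel_iff_of_lowerTable_eq (R := @Eq V) (S := @Eq W) (fun _ _ h => h.symm) (fun _ _ h => h.symm)
      (fun _ _ => iff_of_true rfl rfl) (congrArg (·.2.1) (atomOf_eq_of_depthType_eq h)) i j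
  | mem i j => exact iff_of_eq (congrFun₂ (congrArg (·.2.2) (atomOf_eq_of_depthType_eq h)) i j)
  | not φ ih => exact not_congr (ih hφ h)
  | and φ ψ ihφ ihψ =>
    exact and_congr (ihφ (le_of_max_le_left hφ) h) (ihψ (le_of_max_le_right hφ) h)
  | allV φ ih =>
    obtain ⟨d, rfl⟩ : ∃ d', d = d' + 1 := Nat.exists_eq_add_one.mpr (Nat.zero_lt_of_lt hφ)
    exact forall_congr_of_range_eq (congrArg (·.2.1) h)
      fun _ _ hxy => ih (Nat.le_of_succ_le_succ hφ) hxy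
  | allS φ ih =>
    obtain ⟨d, rfl⟩ : ∃ d', d = d' + 1 := Nat.exists_eq_add_one.mpr (Nat.zero_lt_of_lt hφ)
    exact forall_congr_of_range_eq (congrArg (·.2.2) h)
      fun _ _ hXY => ih (Nat.le_of_succ_le_succ hφ) hXY

end Sat

def graphType (k : ℕ) (G : FinGraph) : DepthType k 0 0 :=
  depthType G.2 k Fin.elim0 Fin.elim0

lemma ker_graphType_le (k : ℕ) : Setoid.ker (graphType k) ≤ msoSetoid k :=
  fun _ _ h φ hφ => sat_iff_of_depthType_eq φ hφ h

theorem four_mul_card_depthType_le {k c : ℕ} (hc : k * (k - 1) + 2 ≤ tower c) :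
    ∀ d n m : ℕ, n + m + d ≤ k → 4 * Nat.card (DepthType d n m) ≤ tower (d + c + 1) := by
  have hatom {n m : ℕ} (h : n + m ≤ k) : 4 * Nat.card (Atom n m) ≤ 2 ^ (k * (k - 1) + 2) := by
    rw [pow_add, mul_comm]
    exact Nat.mul_le_mul_right 4 (card_atom_le h)
  intro d
  induction d with
  | zero =>
    intro n m hnm
    calc 4 * Nat.card (DepthType 0 n m) ≤ 2 ^ (k * (k - 1) + 2) := hatom (by omega)
      _ ≤ 2 ^ tower c := Nat.pow_le_pow_right two_pos hc
      _ = tower (0 + c + 1) := by rw [Nat.zero_add]; rfl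
  | succ d ih =>
    intro n m hnm
    have hct : tower c ≤ tower (d + c) := tower_mono (Nat.le_add_left c d)
    calc 4 * Nat.card (DepthType (d + 1) n m)
        ≤ 2 ^ (k * (k - 1) + 2) * (2 ^ Nat.card (DepthType d (n + 1) m) *
            2 ^ Nat.card (DepthType d n (m + 1))) := by
          rw [card_depthType_succ, ← mul_assoc]
          exact Nat.mul_le_mul_right _ (hatom (by omega))
      _ = 2 ^ (k * (k - 1) + 2 + Nat.card (DepthType d (n + 1) m) +
            Nat.card (DepthType d n (m + 1))) := by ring
      _ ≤ 2 ^ 2 ^ tower (d + c) :=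
          Nat.pow_le_pow_right two_pos (add_add_le_two_pow (hc.trans hct)
            (ih (n + 1) m (by omega)) (ih n (m + 1) (by omega)))
      _ = tower (d + 1 + c + 1) := by rw [Nat.add_right_comm d 1 c]; rfl

end MSO

theorem mso_graph_classes_bound_general (k : ℕ) :
    Finite (MSOGraphClasses k) ∧
      Nat.card (MSOGraphClasses k) ≤ tower (k + 2 + logStar k) := by
  obtain ⟨hfin, hcard⟩ :=
    Setoid.finite_quotient_and_card_le_of_ker_le (MSO.graphType k) (MSO.ker_graphType_le k)
  have htypes := MSO.four_mul_card_depthType_le (mul_pred_add_two_le_tower_logStar_succ k)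
    k 0 0 (by omega)
  rw [show k + (logStar k + 1) + 1 = k + 2 + logStar k by omega] at htypes
  exact ⟨hfin, hcard.trans (by omega)⟩

/-- for every positive integer `k`, the number of
`≡ₖ^{MSO;gr}`-classes of finite graphs is at most `tower (k + 2 + logStar k)`. -/
theorem mso_graph_classes_bound (k : ℕ) (hk : 0 < k) :
    Finite (MSOGraphClasses k) ∧
      Nat.card (MSOGraphClasses k) ≤ tower (k + 2 + logStar k) :=
  mso_graph_classes_bound_general k
end

section
/- Let l be a positive integer and let α be a real number with 1 + 1/(l+1) < α ≤ 1 + 1/l. Then the probability that every connected component of G(n, n^{−α}) has at most l + 1 vertices tends to 1 as n → ∞. -/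
open scoped Classical


instance {V : Type} [Finite V] : Finite (SimpleGraph V) :=
  Finite.of_injective (fun G => G.Adj) fun _ _ h => SimpleGraph.ext h

noncomputable def edgeCount {n : ℕ} (H : SimpleGraph (Fin n)) : ℕ := H.edgeSet.ncard

open Classical in
/-- The probability that the Erdős–Rényi random graph `G(n,p)` (each of the
`n.choose 2` possible edges present independently with probability `p`)
satisfies the property `Q`. -/
noncomputable def graphProb (n : ℕ) (p : ℝ) (Q : SimpleGraph (Fin n) → Prop) : ℝ :=
  haveI : Fintype (SimpleGraph (Fin n)) := Fintype.ofFinite _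
  ∑ H : SimpleGraph (Fin n),
    if Q H then p ^ edgeCount H * (1 - p) ^ (n.choose 2 - edgeCount H) else 0

section core
variable {n : ℕ} {p : ℝ}

lemma edgeCount_eq (H : SimpleGraph (Fin n)) : edgeCount H = H.edgeFinset.card := by
  rw [edgeCount, ← SimpleGraph.coe_edgeFinset, Set.ncard_coe_finset]

lemma binom_sum {β : Type*} [DecidableEq β] (P : Finset β) (p : ℝ) :
    ∑ t ∈ P.powerset, p ^ t.card * (1 - p) ^ (P.card - t.card) = 1 := by
  have h := Finset.prod_add (fun _ : β => p) (fun _ : β => (1 - p)) P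
  simp only [Finset.prod_const] at h
  have : ∀ t ∈ P.powerset, p ^ t.card * (1-p) ^ (P \ t).card
      = p ^ t.card * (1-p) ^ (P.card - t.card) := by
    intro t ht
    rw [Finset.card_sdiff_of_subset (Finset.mem_powerset.mp ht)]
  rw [← Finset.sum_congr rfl this, ← h]
  simp

lemma edgeSet_fromEdgeSet_coe (s : Finset (Sym2 (Fin n)))
    (hs : s ⊆ (⊤ : SimpleGraph (Fin n)).edgeFinset) :
    (SimpleGraph.fromEdgeSet (↑s : Set (Sym2 (Fin n)))).edgeSet = ↑s := by
  rw [SimpleGraph.edgeSet_fromEdgeSet]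
  refine Set.diff_subset.antisymm fun e he => ⟨he, fun hd => ?_⟩
  exact SimpleGraph.not_isDiag_of_mem_edgeSet ⊤
    (SimpleGraph.mem_edgeFinset.mp (hs he)) hd

lemma graphProb_eq_sum_powerset (Q : SimpleGraph (Fin n) → Prop) :
    graphProb n p Q =
      ∑ s ∈ (⊤ : SimpleGraph (Fin n)).edgeFinset.powerset,
        if Q (SimpleGraph.fromEdgeSet (↑s : Set (Sym2 (Fin n))))
        then p ^ s.card * (1 - p) ^ (n.choose 2 - s.card) else 0 := by
  rw [graphProb]
  refine Finset.sum_nbij' (fun H => H.edgeFinset)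
    (fun s => SimpleGraph.fromEdgeSet (↑s : Set (Sym2 (Fin n)))) ?_ ?_ ?_ ?_ ?_
  · intro H _
    exact Finset.mem_powerset.mpr (SimpleGraph.edgeFinset_mono le_top)
  · intro s _; exact @Finset.mem_univ (SimpleGraph (Fin n)) (Fintype.ofFinite _) _
  · intro H _
    rw [SimpleGraph.coe_edgeFinset, SimpleGraph.fromEdgeSet_edgeSet]
  · intro s hs
    apply Finset.coe_injective
    rw [SimpleGraph.coe_edgeFinset]
    exact edgeSet_fromEdgeSet_coe s (Finset.mem_powerset.mp hs)
  · intro H _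
    rw [SimpleGraph.coe_edgeFinset, SimpleGraph.fromEdgeSet_edgeSet, edgeCount_eq]

lemma graphProb_edges (F : Finset (Sym2 (Fin n)))
    (hF : F ⊆ (⊤ : SimpleGraph (Fin n)).edgeFinset) :
    graphProb n p (fun H => (↑F : Set (Sym2 (Fin n))) ⊆ H.edgeSet) = p ^ F.card := by
  classical
  set K := (⊤ : SimpleGraph (Fin n)).edgeFinset with hK
  have hMK : K.card = n.choose 2 := by
    have h1 : (⊤ : SimpleGraph (Fin n)).edgeFinset.card = (Fintype.card (Fin n)).choose 2 :=
      SimpleGraph.card_edgeFinset_top_eq_card_choose_two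
    rw [Fintype.card_fin] at h1
    rw [hK]
    exact h1
  have step1 : graphProb n p (fun H => (↑F : Set (Sym2 (Fin n))) ⊆ H.edgeSet)
      = ∑ s ∈ K.powerset.filter (fun s => F ⊆ s),
          p ^ s.card * (1 - p) ^ (n.choose 2 - s.card) := by
    rw [graphProb_eq_sum_powerset, Finset.sum_filter]
    refine Finset.sum_congr rfl fun s hs => ?_
    simp only [edgeSet_fromEdgeSet_coe s (Finset.mem_powerset.mp hs), Finset.coe_subset]
  rw [step1]
  have step2 : ∑ s ∈ K.powerset.filter (fun s => F ⊆ s),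
      p ^ s.card * (1 - p) ^ (n.choose 2 - s.card)
      = ∑ t ∈ (K \ F).powerset,
          p ^ F.card * (p ^ t.card * (1 - p) ^ ((K \ F).card - t.card)) := by
    refine Finset.sum_nbij' (fun s => s \ F) (fun t => t ∪ F) ?_ ?_ ?_ ?_ ?_
    · intro s hs
      simp only [Finset.mem_filter, Finset.mem_powerset] at hs
      exact Finset.mem_powerset.mpr (Finset.sdiff_subset_sdiff hs.1 le_rfl)
    · intro t ht
      simp only [Finset.mem_powerset] at ht
      refine Finset.mem_filter.mpr ⟨Finset.mem_powerset.mpr ?_, Finset.subset_union_right⟩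
      exact Finset.union_subset (ht.trans (Finset.sdiff_subset)) hF
    · intro s hs
      simp only [Finset.mem_filter, Finset.mem_powerset] at hs
      exact Finset.sdiff_union_of_subset hs.2
    · intro t ht
      simp only [Finset.mem_powerset] at ht
      refine Finset.union_sdiff_cancel_right ?_
      exact Finset.disjoint_of_subset_left ht Finset.sdiff_disjoint
    · intro s hs
      simp only [Finset.mem_filter, Finset.mem_powerset] at hs
      have hcard : (s \ F).card + F.card = s.card :=
        Finset.card_sdiff_add_card_eq_card hs.2
      have hKF : (K \ F).card = K.card - F.card := Finset.card_sdiff_of_subset hF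
      rw [← hcard, pow_add, hKF, ← hMK, Nat.sub_sub, Nat.add_comm (s \ F).card F.card]
      ring
  rw [step2, ← Finset.mul_sum, binom_sum, mul_one]

lemma weight_nonneg (hp0 : 0 ≤ p) (hp1 : p ≤ 1) (a b : ℕ) :
    0 ≤ p ^ a * (1 - p) ^ b :=
  mul_nonneg (pow_nonneg hp0 _) (pow_nonneg (by linarith) _)

lemma graphProb_congr {Q Q' : SimpleGraph (Fin n) → Prop}
    (h : ∀ H, Q H ↔ Q' H) : graphProb n p Q = graphProb n p Q' := by
  rw [graphProb, graphProb]
  exact Finset.sum_congr rfl fun H _ => by rw [if_congr (h H) rfl rfl]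

lemma graphProb_nonneg (hp0 : 0 ≤ p) (hp1 : p ≤ 1)
    (Q : SimpleGraph (Fin n) → Prop) : 0 ≤ graphProb n p Q := by
  rw [graphProb]
  refine Finset.sum_nonneg fun H _ => ?_
  split
  · exact weight_nonneg hp0 hp1 _ _
  · exact le_refl 0

lemma graphProb_true : graphProb n p (fun _ => True) = 1 := by
  have h := graphProb_edges (n := n) (p := p) ∅ (Finset.empty_subset _)
  simp only [Finset.card_empty, pow_zero] at h
  rw [← h]
  exact graphProb_congr fun H => by simp

lemma graphProb_add_compl (Q : SimpleGraph (Fin n) → Prop) :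
    graphProb n p Q + graphProb n p (fun H => ¬ Q H) = 1 := by
  have h1 : graphProb n p (fun _ => True) = 1 := graphProb_true
  conv_rhs => rw [← h1]
  simp only [graphProb]
  rw [← Finset.sum_add_distrib]
  refine Finset.sum_congr rfl fun H _ => ?_
  by_cases h : Q H <;> simp [h]

lemma graphProb_union_le {ι : Type} [Fintype ι] (hp0 : 0 ≤ p) (hp1 : p ≤ 1)
    (Q : SimpleGraph (Fin n) → Prop) (E : ((Fin k → Fin n) × (Fin k → Fin k)) → SimpleGraph (Fin n) → Prop)
    (h : ∀ H, Q H → ∃ i, E i H) :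
    graphProb n p Q ≤ ∑ i, graphProb n p (E i) := by
  simp only [graphProb]
  rw [Finset.sum_comm]
  refine Finset.sum_le_sum fun H _ => ?_
  by_cases hQ : Q H
  · obtain ⟨i₀, hi₀⟩ := h H hQ
    rw [if_pos hQ]
    calc p ^ edgeCount H * (1 - p) ^ (n.choose 2 - edgeCount H)
        = (if E i₀ H then p ^ edgeCount H * (1 - p) ^ (n.choose 2 - edgeCount H) else 0) := by
          rw [if_pos hi₀]
      _ ≤ _ := Finset.single_le_sum (f := fun i =>
            (if E i H then p ^ edgeCount H * (1 - p) ^ (n.choose 2 - edgeCount H) else 0))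
            (fun i _ => by split; exacts [weight_nonneg hp0 hp1 _ _, le_refl 0])
            (Finset.mem_univ i₀)
  · rw [if_neg hQ]
    exact Finset.sum_nonneg fun i _ => by
      split; exacts [weight_nonneg hp0 hp1 _ _, le_refl 0]

lemma snoc_injective {m : ℕ} {β : Type*} {f : Fin m → β} {y : β}
    (hf : Function.Injective f) (hy : y ∉ Set.range f) :
    Function.Injective (Fin.snoc f y : Fin (m+1) → β) := by
  intro a b hab
  induction a using Fin.lastCases with
  | last =>
    induction b using Fin.lastCases with
    | last => rfl
    | cast b =>
      rw [Fin.snoc_last, Fin.snoc_castSucc] at hab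
      exact absurd ⟨b, hab.symm⟩ hy
  | cast a =>
    induction b using Fin.lastCases with
    | last =>
      rw [Fin.snoc_last, Fin.snoc_castSucc] at hab
      exact absurd ⟨a, hab⟩ hy
    | cast b =>
      rw [Fin.snoc_castSucc, Fin.snoc_castSucc] at hab
      rw [hf hab]

lemma exists_chain {n : ℕ} (H : SimpleGraph (Fin n)) (c : H.ConnectedComponent)
    (m : ℕ) (hm : 1 ≤ m) (hcard : m ≤ c.supp.ncard) :
    ∃ f : Fin m → Fin n, Function.Injective f ∧ (∀ i, f i ∈ c.supp) ∧
      ∀ i : Fin m, i.val ≠ 0 → ∃ j : Fin m, j < i ∧ H.Adj (f i) (f j) := by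
  induction m with
  | zero => omega
  | succ m ih =>
    by_cases hm0 : m = 0
    · subst hm0
      have hne : c.supp.Nonempty := by
        rcases c.exists_rep with ⟨v, hv⟩
        exact ⟨v, hv⟩
      obtain ⟨v, hv⟩ := hne
      refine ⟨fun _ => v, fun a b _ => Fin.ext (by omega), fun _ => hv, ?_⟩
      intro i hi
      exact absurd (Nat.lt_one_iff.mp i.isLt) hi
    · obtain ⟨f, hinj, hsupp, hadj⟩ := ih (Nat.one_le_iff_ne_zero.mpr hm0)
        (le_trans (Nat.le_succ m) hcard)
      -- find a new vertex adjacent to the range of f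
      have hfin : (Set.range f).Finite := Set.finite_range f
      have hrange_card : (Set.range f).ncard = m := by
        rw [← Set.image_univ, Set.ncard_image_of_injective _ hinj, Set.ncard_univ]
        simp
      have hnotsub : ¬ c.supp ⊆ Set.range f := by
        intro hsub
        have := Set.ncard_le_ncard hsub hfin
        omega
      obtain ⟨w, hw_supp, hw_not⟩ := Set.not_subset.mp hnotsub
      have hreach : H.Reachable (f ⟨0, by omega⟩) w := by
        have h1 := (SimpleGraph.ConnectedComponent.mem_supp_iff _ _).mp (hsupp ⟨0, by omega⟩)
        have h2 := (SimpleGraph.ConnectedComponent.mem_supp_iff _ _).mp hw_supp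
        exact SimpleGraph.ConnectedComponent.exact (h1.trans h2.symm)
      obtain ⟨d, _, hd_fst, hd_snd⟩ :=
        hreach.some.exists_boundary_dart (Set.range f) ⟨⟨0, by omega⟩, rfl⟩ hw_not
      obtain ⟨j₀, hj₀⟩ := hd_fst
      have hy_supp : d.snd ∈ c.supp := by
        rw [SimpleGraph.ConnectedComponent.mem_supp_iff]
        have h1 := (SimpleGraph.ConnectedComponent.mem_supp_iff _ _).mp (hsupp j₀)
        rw [← h1, hj₀]
        exact SimpleGraph.ConnectedComponent.sound d.adj.symm.reachable
      refine ⟨Fin.snoc f d.snd, snoc_injective hinj hd_snd, ?_, ?_⟩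
      · intro i
        induction i using Fin.lastCases with
        | last => rw [Fin.snoc_last]; exact hy_supp
        | cast i => rw [Fin.snoc_castSucc]; exact hsupp i
      · intro i hi
        induction i using Fin.lastCases with
        | last =>
          refine ⟨j₀.castSucc, Fin.castSucc_lt_last j₀, ?_⟩
          rw [Fin.snoc_last, Fin.snoc_castSucc, hj₀]
          exact d.adj.symm
        | cast i =>
          have hi' : i.val ≠ 0 := by simpa using hi
          obtain ⟨j, hj_lt, hj_adj⟩ := hadj i hi'
          refine ⟨j.castSucc, by simpa using hj_lt, ?_⟩
          rw [Fin.snoc_castSucc, Fin.snoc_castSucc]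
          exact hj_adj

lemma graphProb_false : graphProb n p (fun _ => False) = 0 := by
  rw [graphProb]
  simp

lemma bad_prob_le (n k : ℕ) (hk : 1 ≤ k) (hp0 : 0 ≤ p) (hp1 : p ≤ 1) :
    graphProb n p (fun H => ∃ c : H.ConnectedComponent, k ≤ c.supp.ncard)
      ≤ ((n : ℝ) ^ k * (k : ℝ) ^ k) * p ^ (k - 1) := by
  classical
  set T : Finset (Fin k) := Finset.univ.filter (fun i : Fin k => i.val ≠ 0) with hT
  have hTcard : T.card = k - 1 := by
    have : T = Finset.univ.erase ⟨0, hk⟩ := by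
      ext i
      simp [hT, Fin.ext_iff]
    rw [this, Finset.card_erase_of_mem (Finset.mem_univ _), Finset.card_univ, Fintype.card_fin]
  set Pgood : ((Fin k → Fin n) × (Fin k → Fin k)) → Prop := fun fg =>
    Function.Injective fg.1 ∧ ∀ i : Fin k, i.val ≠ 0 → fg.2 i < i with hP
  set Fe : ((Fin k → Fin n) × (Fin k → Fin k)) → Finset (Sym2 (Fin n)) := fun fg =>
    T.image (fun i => s(fg.1 i, fg.1 (fg.2 i))) with hFe
  set E : ((Fin k → Fin n) × (Fin k → Fin k)) → SimpleGraph (Fin n) → Prop := fun fg H =>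
    Pgood fg ∧ (↑(Fe fg) : Set (Sym2 (Fin n))) ⊆ H.edgeSet with hE
  have hcover : ∀ H, (∃ c : H.ConnectedComponent, k ≤ c.supp.ncard) → ∃ fg, E fg H := by
    intro H ⟨c, hc⟩
    obtain ⟨f, hinj, hsupp, hadj⟩ := exists_chain H c k hk hc
    set g : Fin k → Fin k := fun i =>
      if h : i.val ≠ 0 then (hadj i h).choose else i with hg
    have hglt : ∀ i : Fin k, i.val ≠ 0 → g i < i ∧ H.Adj (f i) (f (g i)) := by
      intro i hi
      rw [hg]
      simp only [dif_pos hi]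
      exact (hadj i hi).choose_spec
    refine ⟨(f, g), ⟨hinj, fun i hi => (hglt i hi).1⟩, ?_⟩
    intro e he
    simp only [hFe, Finset.coe_image, Set.mem_image, Finset.mem_coe, hT,
      Finset.mem_filter] at he
    obtain ⟨i, ⟨_, hi⟩, rfl⟩ := he
    exact (hglt i hi).2
  have hprob_le : ∀ fg : (Fin k → Fin n) × (Fin k → Fin k), graphProb n p (E fg) ≤ p ^ (k - 1) := by
    intro fg
    by_cases hgood : Pgood fg
    · have hFsub : Fe fg ⊆ (⊤ : SimpleGraph (Fin n)).edgeFinset := by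
        intro e he
        simp only [hFe, Finset.mem_image, hT, Finset.mem_filter] at he
        obtain ⟨i, ⟨_, hi⟩, rfl⟩ := he
        rw [SimpleGraph.mem_edgeFinset, SimpleGraph.mem_edgeSet, SimpleGraph.top_adj]
        intro hf
        exact absurd (hgood.1 hf) (ne_of_gt (hgood.2 i hi))
      have hFcard : (Fe fg).card = k - 1 := by
        rw [hFe]
        rw [Finset.card_image_of_injOn, hTcard]
        intro i hi i' hi' hee
        simp only [hT, Finset.mem_coe, Finset.mem_filter] at hi hi'
        rcases Sym2.eq_iff.mp hee with ⟨h1, h2⟩ | ⟨h1, h2⟩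
        · exact hgood.1 h1
        · have e1 : i = fg.2 i' := hgood.1 h1
          have e2 : fg.2 i = i' := hgood.1 h2
          have l1 := hgood.2 i' hi'.2
          have l2 := hgood.2 i hi.2
          rw [← e1] at l1
          rw [e2] at l2
          exact absurd (l1.trans l2) (lt_irrefl i)
      have : graphProb n p (E fg)
          = graphProb n p (fun H => (↑(Fe fg) : Set (Sym2 (Fin n))) ⊆ H.edgeSet) :=
        graphProb_congr fun H => and_iff_right hgood
      rw [this, graphProb_edges _ hFsub, hFcard]
    · have : graphProb n p (E fg) = graphProb n p (fun _ => False) :=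
        graphProb_congr fun H => by simp [hE, hgood]
      rw [this, graphProb_false]
      exact pow_nonneg hp0 _
  calc graphProb n p (fun H => ∃ c : H.ConnectedComponent, k ≤ c.supp.ncard)
      ≤ ∑ fg : (Fin k → Fin n) × (Fin k → Fin k), graphProb n p (E fg) := graphProb_union_le (ι := (Fin k → Fin n) × (Fin k → Fin k)) hp0 hp1 _ E hcover
    _ ≤ ∑ _fg : (Fin k → Fin n) × (Fin k → Fin k), p ^ (k - 1) := Finset.sum_le_sum fun fg _ => hprob_le fg
    _ = (Fintype.card ((Fin k → Fin n) × (Fin k → Fin k)) : ℝ) * p ^ (k - 1) := by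
        rw [Finset.sum_const, Finset.card_univ, nsmul_eq_mul]
    _ ≤ ((n : ℝ) ^ k * (k : ℝ) ^ k) * p ^ (k - 1) := by
        have hcard : Fintype.card ((Fin k → Fin n) × (Fin k → Fin k)) = n ^ k * k ^ k := by
          simp
        rw [hcard]
        push_cast
        exact le_refl _


/-- for a positive integer `l` and `1 + 1/(l+1) < α ≤ 1 + 1/l`,
a.a.s. every connected component of `G(n, n^{-α})` has at most `l + 1` vertices. -/
theorem aas_small_components (l : ℕ) (hl : 0 < l) (α : ℝ)
    (h1 : 1 + 1 / ((l : ℝ) + 1) < α) (h2 : α ≤ 1 + 1 / (l : ℝ)) :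
    Filter.Tendsto
      (fun n => graphProb n ((n : ℝ) ^ (-α)) fun H =>
        ∀ c : H.ConnectedComponent, c.supp.ncard ≤ l + 1)
      Filter.atTop (nhds 1) := by
  have hl1 : (0:ℝ) < (l:ℝ) + 1 := by positivity
  have hα0 : 0 < α := by
    have : (0:ℝ) < 1 / ((l:ℝ)+1) := by positivity
    linarith
  set k : ℕ := l + 2 with hk
  -- the exponent is negative
  have hexp : (k : ℝ) - α * ((l:ℕ)+1) < 0 := by
    have hmul : (1 + 1/((l:ℝ)+1)) * ((l:ℝ)+1) = (l:ℝ) + 2 := by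
      field_simp
      ring
    have : (1 + 1/((l:ℝ)+1)) * ((l:ℝ)+1) < α * ((l:ℝ)+1) :=
      mul_lt_mul_of_pos_right h1 hl1
    rw [hmul] at this
    push_cast
    linarith [show (k:ℝ) = (l:ℝ) + 2 by rw [hk]; push_cast; ring]
  set c : ℝ := (k:ℝ) - α * ((l:ℕ)+1) with hc
  set b : ℕ → ℝ := fun n => ((k:ℝ)^k) * ((n:ℝ) ^ c) with hb
  have hbtend : Filter.Tendsto b Filter.atTop (nhds 0) := by
    have hpow : Filter.Tendsto (fun x : ℝ => x ^ c) Filter.atTop (nhds 0) := by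
      have := tendsto_rpow_neg_atTop (y := -c) (by linarith)
      simpa using this
    have hcast : Filter.Tendsto (fun n : ℕ => (n:ℝ)) Filter.atTop Filter.atTop :=
      tendsto_natCast_atTop_atTop
    have := (hpow.comp hcast).const_mul ((k:ℝ)^k)
    simpa [hb, mul_zero] using this
  have honetend : Filter.Tendsto (fun n : ℕ => 1 - b n) Filter.atTop (nhds 1) := by
    have := (tendsto_const_nhds (x := (1:ℝ)) (f := Filter.atTop (α := ℕ))).sub hbtend
    simpa using this
  refine tendsto_of_tendsto_of_tendsto_of_le_of_le' honetend
    tendsto_const_nhds ?_ ?_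
  · -- eventual lower bound
    filter_upwards [Filter.eventually_ge_atTop 1] with n hn
    set p : ℝ := (n:ℝ) ^ (-α) with hp
    have hp0 : 0 ≤ p := Real.rpow_nonneg (Nat.cast_nonneg n) _
    have hp1 : p ≤ 1 := by
      apply Real.rpow_le_one_of_one_le_of_nonpos
      · exact_mod_cast hn
      · linarith
    have hcompl := graphProb_add_compl (n := n) (p := p)
      (fun H => ∀ c : H.ConnectedComponent, c.supp.ncard ≤ l + 1)
    have hbadeq : graphProb n p
        (fun H => ¬ ∀ c : H.ConnectedComponent, c.supp.ncard ≤ l + 1)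
        = graphProb n p (fun H => ∃ c : H.ConnectedComponent, k ≤ c.supp.ncard) := by
      refine graphProb_congr fun H => ?_
      push_neg
      constructor
      · rintro ⟨c, hc⟩; exact ⟨c, by omega⟩
      · rintro ⟨c, hc⟩; exact ⟨c, by omega⟩
    have hbadle : graphProb n p (fun H => ∃ c : H.ConnectedComponent, k ≤ c.supp.ncard)
        ≤ ((n:ℝ)^k * (k:ℝ)^k) * p ^ (k-1) :=
      bad_prob_le n k (by omega) hp0 hp1
    -- identify the bound with b n
    have hbval : ((n:ℝ)^k * (k:ℝ)^k) * p ^ (k-1) = b n := by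
      have hn0 : (0:ℝ) < (n:ℝ) := by exact_mod_cast hn
      have e1 : p ^ (k-1) = (n:ℝ) ^ (-α * ((l:ℕ)+1)) := by
        rw [hp, ← Real.rpow_natCast ((n:ℝ) ^ (-α)) (k-1), ← Real.rpow_mul hn0.le]
        congr 1
        have : ((k - 1 : ℕ) : ℝ) = ((l:ℕ):ℝ) + 1 := by
          rw [hk]; push_cast; ring
        rw [this]
      have e2 : ((n:ℝ)^k) = (n:ℝ) ^ ((k:ℕ):ℝ) := by
        rw [Real.rpow_natCast]
      rw [e1, e2, hb]
      dsimp only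
      rw [hc, mul_comm ((n:ℝ) ^ ((k:ℕ):ℝ)) ((k:ℝ)^k), mul_assoc,
        ← Real.rpow_add hn0]
      congr 2
      push_cast
      ring
    have hnonneg : 0 ≤ graphProb n p
        (fun H => ¬ ∀ c : H.ConnectedComponent, c.supp.ncard ≤ l + 1) :=
      graphProb_nonneg hp0 hp1 _
    rw [hbadeq] at hnonneg
    linarith [hbadle, hcompl, hbval, hnonneg]
  · -- eventual upper bound
    filter_upwards [Filter.eventually_ge_atTop 1] with n hn
    set p : ℝ := (n:ℝ) ^ (-α) with hp
    have hp0 : 0 ≤ p := Real.rpow_nonneg (Nat.cast_nonneg n) _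
    have hp1 : p ≤ 1 := by
      apply Real.rpow_le_one_of_one_le_of_nonpos
      · exact_mod_cast hn
      · linarith
    have hcompl := graphProb_add_compl (n := n) (p := p)
      (fun H => ∀ c : H.ConnectedComponent, c.supp.ncard ≤ l + 1)
    have hnonneg : 0 ≤ graphProb n p
        (fun H => ¬ ∀ c : H.ConnectedComponent, c.supp.ncard ≤ l + 1) :=
      graphProb_nonneg hp0 hp1 _
    linarith
end core
end
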